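/- arXiv:2404.12265 — 4 statements merged into one kernel-verified Lean document; each statement's English description precedes it below -/
import Mathlib

section
/- Let Γ be an induced subcomplex of Δ, and let Δ' be the biased derived subdivision of the pair (Γ, Δ), obtained by stellarly subdividing all faces of Δ not in Γ in order of reverse inclusion. Then Γ is a strongly induced subcomplex of Δ'. -/
open scoped Classical

namespace Fary

variable {V : Type*}

/-- A simplicial complex: a family of finite sets closed under taking subsets. -/
def IsComplex (K : Set (Finset V)) : Prop := ∀ s ∈ K, ∀ t ⊆ s, t ∈ K

/-- The star of a simplex `σ`: all subsets of simplices of `K` containing `σ`. -/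
def star (σ : Finset V) (K : Set (Finset V)) : Set (Finset V) :=
  {t | ∃ ρ ∈ K, σ ⊆ ρ ∧ t ⊆ ρ}

/-- The set of faces of a single simplex `τ`. -/
def facesOf (τ : Finset V) : Set (Finset V) := {ρ | ρ ⊆ τ}

/-- `Γ` is an induced subcomplex of `Δ`. -/
def Induced (Γ Δ : Set (Finset V)) : Prop :=
  Γ ⊆ Δ ∧ ∀ s ∈ Δ, (∀ v ∈ s, {v} ∈ Γ) → s ∈ Γ

/-- `Γ` is a strongly induced subcomplex of `Δ`: for every simplex of `Δ` not in `Γ`,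
the intersection of `Γ` with its star is the set of faces of a single simplex of `Γ`. -/
def StronglyInduced (Γ Δ : Set (Finset V)) : Prop :=
  Γ ⊆ Δ ∧ ∀ σ ∈ Δ, σ ∉ Γ → ∃ τ ∈ Γ, Γ ∩ star σ Δ = facesOf τ

/-- The derived (barycentric) subdivision: its simplices are the chains (under inclusion)
of nonempty simplices of `Δ`. -/
def derived (Δ : Set (Finset V)) : Set (Finset (Finset V)) :=
  {C | (↑C : Set (Finset V)) ⊆ {s | s ∈ Δ ∧ s.Nonempty} ∧
       IsChain (· ⊆ ·) (↑C : Set (Finset V))}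

/-- The biased derived subdivision of a pair `Γ ⊆ Δ`: simplices are
`τ ∪ {v_{σ₁}, …, v_{σ_k}}` with `τ ∈ Γ`, `σ₁ ⊂ … ⊂ σ_k` simplices of `Δ` not in `Γ`
and `τ ⊆ σ₁`. Old vertices are `Sum.inl`, the new vertex `v_σ` is `Sum.inr σ`. -/
def biased [DecidableEq V] (Γ Δ : Set (Finset V)) : Set (Finset (V ⊕ Finset V)) :=
  {t | ∃ τ ∈ Γ, ∃ C : Finset (Finset V),
    (↑C : Set (Finset V)) ⊆ {s | s ∈ Δ ∧ s ∉ Γ} ∧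
    IsChain (· ⊆ ·) (↑C : Set (Finset V)) ∧
    (∀ s ∈ C, τ ⊆ s) ∧
    t = τ.image Sum.inl ∪ C.image Sum.inr}

/-- The copy of a complex `Γ` over `V` inside the vertex type `V ⊕ Finset V`. -/
def inlify [DecidableEq V] (Γ : Set (Finset V)) : Set (Finset (V ⊕ Finset V)) :=
  {t | ∃ s ∈ Γ, t = s.image Sum.inl}

/-- The vertex map of the edge contraction identifying `b` with `a`. -/
def cmap [DecidableEq V] (a b : V) (v : V) : V := if v = b then a else v

/-- The edge contraction `C_e(K)` at `e = {a,b}`: images of simplices under `cmap a b`. -/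
def contract [DecidableEq V] (a b : V) (K : Set (Finset V)) : Set (Finset V) :=
  {t | ∃ s ∈ K, t = s.image (cmap a b)}

/-- A missing simplex of `K`: not a simplex, but all proper subsets are simplices. -/
def Missing (K : Set (Finset V)) (m : Finset V) : Prop := m ∉ K ∧ ∀ t ⊂ m, t ∈ K

/-- The stellar subdivision of `Δ` at `σ`, with new vertex `none`. -/
def stellar [DecidableEq V] (σ : Finset V) (Δ : Set (Finset V)) : Set (Finset (Option V)) :=
  {t | (∃ s ∈ Δ, ¬ σ ⊆ s ∧ t = s.image some) ∨
       (∃ τ ρ : Finset V, τ ⊂ σ ∧ ρ ∩ σ = ∅ ∧ σ ∪ ρ ∈ Δ ∧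
         t = insert none ((τ ∪ ρ).image some))}

/-- The edge subdivision `S_e` at the edge `e = {a,b}` is the stellar subdivision at `e`. -/
def subdivEdge [DecidableEq V] (a b : V) (K : Set (Finset V)) : Set (Finset (Option V)) :=
  stellar {a, b} K

/-- `s` is a facet (maximal simplex) of `K`. -/
def IsFacet (K : Set (Finset V)) (s : Finset V) : Prop :=
  s ∈ K ∧ ∀ t ∈ K, s ⊆ t → t = s

end Fary

namespace Fary

/-- if `Γ` is induced in `Δ` then `Γ` is strongly induced in the biased
derived subdivision of the pair `(Γ, Δ)`. -/
theorem biased_stronglyInduced {V : Type*} [DecidableEq V] (Γ Δ : Set (Finset V))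
    (hΓ : IsComplex Γ) (hΔ : IsComplex Δ) (hind : Induced Γ Δ) :
    StronglyInduced (inlify Γ) (biased Γ Δ) := by
  obtain ⟨hsub, hind2⟩ := hind
  constructor
  · rintro t ⟨s, hs, rfl⟩
    exact ⟨s, hs, ∅, by simp, by simp, by simp, by simp⟩
  · rintro σ hσ hσΓ
    obtain ⟨τ, hτ, C, hCΔ, hCchain, hτC, rfl⟩ := hσ
    have hCne : C.Nonempty := by
      rcases C.eq_empty_or_nonempty with rfl | h
      · exact absurd ⟨τ, hτ, by simp⟩ hσΓ
      · exact h
    obtain ⟨σ₁, hσ₁C, hσ₁min⟩ : ∃ m ∈ C, ∀ s ∈ C, m ⊆ s := by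
      obtain ⟨m, hm, hmin⟩ := C.exists_minimal hCne
      refine ⟨m, hm, fun s hs => ?_⟩
      rcases eq_or_ne s m with rfl | hne
      · exact subset_rfl
      · rcases hCchain (by exact_mod_cast hm) (by exact_mod_cast hs) (Ne.symm hne) with h | h
        · exact h
        · exact hmin hs h
    have hσ₁Δ : σ₁ ∈ Δ := (hCΔ hσ₁C).1
    set τs : Finset V := σ₁.filter (fun v => {v} ∈ Γ) with hτsdef
    have hτsΓ : τs ∈ Γ :=
      hind2 _ (hΔ _ hσ₁Δ _ (Finset.filter_subset _ _)) (fun v hv => (Finset.mem_filter.1 hv).2)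
    have hττs : τ ⊆ τs := fun v hv => Finset.mem_filter.2
      ⟨hτC _ hσ₁C hv, hΓ _ hτ _ (Finset.singleton_subset_iff.2 hv)⟩
    refine ⟨τs.image Sum.inl, ⟨τs, hτsΓ, rfl⟩, ?_⟩
    ext t
    constructor
    · rintro ⟨⟨s, hsΓ, rfl⟩, ρ, hρ, hσρ, htρ⟩
      obtain ⟨τ', hτ', C', hC'Δ, hC'chain, hτ'C', rfl⟩ := hρ
      have hsτ' : s ⊆ τ' := by
        intro v hv
        have : Sum.inl v ∈ τ'.image Sum.inl ∪ C'.image Sum.inr :=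
          htρ (Finset.mem_image_of_mem _ hv)
        rcases Finset.mem_union.1 this with h | h
        · obtain ⟨w, hw, hwe⟩ := Finset.mem_image.1 h
          cases hwe; exact hw
        · obtain ⟨w, _, hwe⟩ := Finset.mem_image.1 h
          exact absurd hwe (by simp)
      have hσ₁C' : σ₁ ∈ C' := by
        have : Sum.inr σ₁ ∈ τ'.image Sum.inl ∪ C'.image Sum.inr :=
          hσρ (Finset.mem_union_right _ (Finset.mem_image_of_mem _ hσ₁C))
        rcases Finset.mem_union.1 this with h | h
        · obtain ⟨w, _, hwe⟩ := Finset.mem_image.1 h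
          exact absurd hwe (by simp)
        · obtain ⟨w, hw, hwe⟩ := Finset.mem_image.1 h
          cases hwe; exact hw
      have hτ'σ₁ : τ' ⊆ σ₁ := hτ'C' _ hσ₁C'
      have hsτs : s ⊆ τs := fun v hv => Finset.mem_filter.2
        ⟨hτ'σ₁ (hsτ' hv), hΓ _ hτ' _ (Finset.singleton_subset_iff.2 (hsτ' hv))⟩
      exact Finset.image_subset_image hsτs
    · intro ht
      obtain ⟨u, hu, rfl⟩ := Finset.subset_image_iff.1 ht
      refine ⟨⟨u, hΓ _ hτsΓ _ hu, rfl⟩,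
        τs.image Sum.inl ∪ C.image Sum.inr,
        ⟨τs, hτsΓ, C, hCΔ, hCchain,
          fun s hs => (Finset.filter_subset _ _).trans (hσ₁min s hs), rfl⟩, ?_, ?_⟩
      · exact Finset.union_subset_union (Finset.image_subset_image hττs) subset_rfl
      · exact (Finset.image_subset_image hu).trans Finset.subset_union_left

end Fary
end

section
/- In the biased derived subdivision Δ' of an induced pair Γ ⊆ Δ, every simplex σ of Δ' not contained in Γ decomposes uniquely as a disjoint union of a (possibly empty) simplex τ of Γ and a nonempty chain σ_1 ⊊ σ_2 ⊊ … ⊊ σ_k of simplices of Δ not in Γ, with τ ⊆ σ_1. -/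
open scoped Classical

namespace Fary

lemma image_inl_union_image_inr {α β : Type*} [DecidableEq α] [DecidableEq β]
    (s : Finset α) (t : Finset β) : s.image Sum.inl ∪ t.image Sum.inr = s.disjSum t := by
  ext (a | b) <;> simp

theorem biased_unique_decomposition_general {V : Type*} [DecidableEq V] (Γ Δ : Set (Finset V))
    (σ : Finset (V ⊕ Finset V)) (hσ : σ ∈ biased Γ Δ) (hσΓ : σ ∉ inlify Γ) :
    ∃! p : Finset V × Finset (Finset V),
      p.1 ∈ Γ ∧
      (↑p.2 : Set (Finset V)) ⊆ {s | s ∈ Δ ∧ s ∉ Γ} ∧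
      p.2.Nonempty ∧
      IsChain (· ⊆ ·) (↑p.2 : Set (Finset V)) ∧
      (∀ s ∈ p.2, p.1 ⊆ s) ∧
      σ = p.1.image Sum.inl ∪ p.2.image Sum.inr := by
  obtain ⟨τ, hτ, C, hCΔ, hCchain, hτC, rfl⟩ := hσ
  have hC : C.Nonempty := by
    refine Finset.nonempty_iff_ne_empty.2 fun hC ↦ hσΓ ⟨τ, hτ, ?_⟩
    simp [hC]
  refine ⟨(τ, C), ⟨hτ, hCΔ, hC, hCchain, hτC, rfl⟩, ?_⟩
  rintro ⟨τ', C'⟩ ⟨-, -, -, -, -, h⟩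
  simp only [image_inl_union_image_inr, Finset.disjSum_inj] at h
  obtain ⟨rfl, rfl⟩ := h
  rfl

/-- every simplex of the biased derived subdivision not contained in `Γ`
decomposes uniquely as a disjoint union of a (possibly empty) simplex `τ` of `Γ` and a
nonempty chain `σ₁ ⊊ … ⊊ σ_k` of simplices of `Δ` not in `Γ`, with `τ ⊆ σ₁`. -/
theorem biased_unique_decomposition {V : Type*} [DecidableEq V] (Γ Δ : Set (Finset V))
    (hΓ : IsComplex Γ) (hΔ : IsComplex Δ) (hind : Induced Γ Δ)
    (σ : Finset (V ⊕ Finset V)) (hσ : σ ∈ biased Γ Δ) (hσΓ : σ ∉ inlify Γ) :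
    ∃! p : Finset V × Finset (Finset V),
      p.1 ∈ Γ ∧
      (↑p.2 : Set (Finset V)) ⊆ {s | s ∈ Δ ∧ s ∉ Γ} ∧
      p.2.Nonempty ∧
      IsChain (· ⊆ ·) (↑p.2 : Set (Finset V)) ∧
      (∀ s ∈ p.2, p.1 ⊆ s) ∧
      σ = p.1.image Sum.inl ∪ p.2.image Sum.inr :=
  biased_unique_decomposition_general Γ Δ σ hσ hσΓ

end Fary
end

section
/- For a simplex σ of the biased derived subdivision Δ' of an induced pair Γ ⊆ Δ, with σ disjoint from Γ and corresponding to a chain σ_1 ⊊ … ⊊ σ_k of simplices of Δ not in Γ, the intersection Γ ∩ st_σ(Δ') equals the set of faces of the simplex σ_1 ∩ V(Γ), which is a simplex of Γ. -/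
open scoped Classical

namespace Fary

/-! The old vertices of a biased simplex lie in every simplex of its chain, hence in `σ₁`;
lying in `Γ`, they lie in `σ₁ ∩ V(Γ)`, which is in `Γ` because `Γ` is induced. Conversely
`σ₁ ∩ V(Γ)` lies below the whole chain, so together with `C` it spans a biased simplex. -/

section SumImage

variable {α β : Type*} [DecidableEq α] [DecidableEq β]

theorem image_inl_subset_union_iff {s τ : Finset α} {D : Finset β} :
    s.image (Sum.inl : α → α ⊕ β) ⊆ τ.image Sum.inl ∪ D.image Sum.inr ↔ s ⊆ τ := by
  simp [Finset.subset_iff]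

theorem image_inr_subset_union_iff {C D : Finset β} {τ : Finset α} :
    C.image (Sum.inr : β → α ⊕ β) ⊆ τ.image Sum.inl ∪ D.image Sum.inr ↔ C ⊆ D := by
  simp [Finset.subset_iff]

end SumImage

section BiasedStar

variable {V : Type*}

theorem Induced.filter_singleton_mem {Γ Δ : Set (Finset V)} (hΔ : IsComplex Δ)
    (hind : Induced Γ Δ) {σ : Finset V} (hσ : σ ∈ Δ) :
    (σ.filter fun v => {v} ∈ Γ) ∈ Γ :=
  hind.2 _ (hΔ σ hσ _ (Finset.filter_subset _ _)) fun _ hv => (Finset.mem_filter.mp hv).2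

theorem IsComplex.subset_filter_singleton_mem {Γ : Set (Finset V)} (hΓ : IsComplex Γ)
    {s σ : Finset V} (hs : s ∈ Γ) (hsσ : s ⊆ σ) : s ⊆ σ.filter fun v => {v} ∈ Γ :=
  fun v hv => Finset.mem_filter.mpr ⟨hsσ hv, hΓ s hs {v} (Finset.singleton_subset_iff.mpr hv)⟩

variable [DecidableEq V]

theorem subset_of_image_inl_mem_star_biased {Γ Δ : Set (Finset V)} {C : Finset (Finset V)}
    {s : Finset V} (hs : s.image Sum.inl ∈ star (C.image Sum.inr) (biased Γ Δ)) :
    ∀ σ ∈ C, s ⊆ σ := by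
  obtain ⟨_, ⟨τ, -, D, -, -, hτD, rfl⟩, hCD, hsτ⟩ := hs
  rw [image_inr_subset_union_iff] at hCD
  rw [image_inl_subset_union_iff] at hsτ
  exact fun σ hσ => hsτ.trans (hτD σ (hCD hσ))

theorem image_inl_mem_star_biased {Γ Δ : Set (Finset V)} {C : Finset (Finset V)}
    (hC : (↑C : Set (Finset V)) ⊆ {s | s ∈ Δ ∧ s ∉ Γ})
    (hchain : IsChain (· ⊆ ·) (↑C : Set (Finset V)))
    {τ : Finset V} (hτ : τ ∈ Γ) (hτC : ∀ σ ∈ C, τ ⊆ σ) {s : Finset V} (hsτ : s ⊆ τ) :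
    s.image Sum.inl ∈ star (C.image Sum.inr) (biased Γ Δ) :=
  ⟨τ.image Sum.inl ∪ C.image Sum.inr, ⟨τ, hτ, C, hC, hchain, hτC, rfl⟩,
    Finset.subset_union_right, (Finset.image_subset_image hsτ).trans Finset.subset_union_left⟩

end BiasedStar

theorem biased_star_inter_general {V : Type*} [DecidableEq V] (Γ Δ : Set (Finset V))
    (hΓ : IsComplex Γ) (hΔ : IsComplex Δ) (hind : Induced Γ Δ)
    (C : Finset (Finset V))
    (hC : (↑C : Set (Finset V)) ⊆ {s | s ∈ Δ ∧ s ∉ Γ})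
    (hchain : IsChain (· ⊆ ·) (↑C : Set (Finset V)))
    (σ₁ : Finset V) (hσ₁ : σ₁ ∈ C) (hmin : ∀ s ∈ C, σ₁ ⊆ s) :
    (σ₁.filter fun v => {v} ∈ Γ) ∈ Γ ∧
    inlify Γ ∩ star (C.image Sum.inr) (biased Γ Δ)
      = facesOf ((σ₁.filter fun v => {v} ∈ Γ).image Sum.inl) := by
  have hτ₀ := hind.filter_singleton_mem hΔ (hC hσ₁).1
  refine ⟨hτ₀, Set.ext fun t => ⟨?_, fun ht => ?_⟩⟩
  · rintro ⟨⟨s, hs, rfl⟩, hstar⟩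
    exact Finset.image_subset_image <|
      hΓ.subset_filter_singleton_mem hs (subset_of_image_inl_mem_star_biased hstar σ₁ hσ₁)
  · obtain ⟨s, hsτ₀, rfl⟩ := Finset.subset_image_iff.mp ht
    exact ⟨⟨s, hΓ _ hτ₀ s hsτ₀, rfl⟩, image_inl_mem_star_biased hC hchain hτ₀
      (fun σ hσ => (Finset.filter_subset _ _).trans (hmin σ hσ)) hsτ₀⟩

/-- for a simplex of the biased derived subdivision disjoint from `Γ`,
corresponding to a chain `σ₁ ⊊ … ⊊ σ_k`, the intersection of `Γ` with its star is the
set of faces of the simplex `σ₁ ∩ V(Γ)`, which is a simplex of `Γ`. -/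
theorem biased_star_inter {V : Type*} [DecidableEq V] (Γ Δ : Set (Finset V))
    (hΓ : IsComplex Γ) (hΔ : IsComplex Δ) (hind : Induced Γ Δ) (hempty : ∅ ∈ Γ)
    (C : Finset (Finset V)) (hCne : C.Nonempty)
    (hC : (↑C : Set (Finset V)) ⊆ {s | s ∈ Δ ∧ s ∉ Γ})
    (hchain : IsChain (· ⊆ ·) (↑C : Set (Finset V)))
    (σ₁ : Finset V) (hσ₁ : σ₁ ∈ C) (hmin : ∀ s ∈ C, σ₁ ⊆ s) :
    (σ₁.filter fun v => {v} ∈ Γ) ∈ Γ ∧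
    inlify Γ ∩ star (C.image Sum.inr) (biased Γ Δ)
      = facesOf ((σ₁.filter fun v => {v} ∈ Γ).image Sum.inl) :=
  biased_star_inter_general Γ Δ hΓ hΔ hind C hC hchain σ₁ hσ₁ hmin

end Fary
end

section
/- Let Γ be a strongly induced subcomplex of Δ and e a valid edge of Γ (i.e., e is contained in no missing simplex of Γ). Then e is a valid edge of Δ, i.e., e is contained in no missing simplex of Δ. -/
open scoped Classical

/-!
Suppose `m` is a missing simplex of `Δ` containing `e = {a, b}`, and let `S` be the set of
vertices of `m` that are not vertices of `Γ`. If `S` is empty, every proper face of `m` lies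
in `Γ` (a strongly induced subcomplex is induced), so `m` is missing in `Γ`, against validity
of `e`. Otherwise `S` is a proper face of `m` outside `Γ`, and each `S ∪ {w}` with `w ∈ m \ S`
is still a proper face (it misses `a` or `b`). Strong inducedness puts all these `w` into the
single simplex `τ` describing `Γ ∩ st_S(Δ)`, so `m \ S` lies in a simplex of `Δ` containing `S`,
and then so does `m`, a contradiction.
-/

namespace Fary

section

variable {V : Type*} {Γ Δ : Set (Finset V)} {σ τ : Finset V}

lemma singleton_mem_star {ρ : Finset V} (hρ : ρ ∈ Δ) (hσρ : σ ⊆ ρ) {u : V} (hu : u ∈ ρ) :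
    {u} ∈ star σ Δ :=
  ⟨ρ, hρ, hσρ, Finset.singleton_subset_iff.mpr hu⟩

lemma mem_of_inter_star_eq_facesOf (h : Γ ∩ star σ Δ = facesOf τ) {u : V} (hu : {u} ∈ Γ)
    {ρ : Finset V} (hρ : ρ ∈ Δ) (hσρ : σ ⊆ ρ) (huρ : u ∈ ρ) : u ∈ τ := by
  have hu' : {u} ∈ facesOf τ := h ▸ ⟨hu, singleton_mem_star hρ hσρ huρ⟩
  exact Finset.singleton_subset_iff.mp hu'

theorem StronglyInduced.induced (hΓ : IsComplex Γ) (h : StronglyInduced Γ Δ) :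
    Induced Γ Δ := by
  refine ⟨h.1, fun σ hσΔ hverts => ?_⟩
  by_contra hσΓ
  obtain ⟨τ, hτΓ, heq⟩ := h.2 σ hσΔ hσΓ
  exact hσΓ <| hΓ τ hτΓ σ fun u hu =>
    mem_of_inter_star_eq_facesOf heq (hverts u hu) hσΔ subset_rfl hu

theorem StronglyInduced.union_mem [DecidableEq V] (hΔ : IsComplex Δ)
    (h : StronglyInduced Γ Δ) (hσΔ : σ ∈ Δ) (hσΓ : σ ∉ Γ) {T : Finset V}
    (hT : ∀ w ∈ T, {w} ∈ Γ ∧ insert w σ ∈ Δ) : σ ∪ T ∈ Δ := by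
  obtain ⟨τ, -, heq⟩ := h.2 σ hσΔ hσΓ
  have hTτ : T ∈ facesOf τ := fun w hw =>
    mem_of_inter_star_eq_facesOf heq (hT w hw).1 (hT w hw).2
      (Finset.subset_insert w σ) (Finset.mem_insert_self w σ)
  obtain ⟨-, ρ, hρΔ, hσρ, hTρ⟩ := heq.symm ▸ hTτ
  exact hΔ ρ hρΔ _ (Finset.union_subset hσρ hTρ)

theorem Missing.of_induced {m : Finset V} (h : Induced Γ Δ) (hm : Missing Δ m)
    (hverts : ∀ v ∈ m, {v} ∈ Γ) : Missing Γ m :=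
  ⟨fun hmΓ => hm.1 (h.1 hmΓ), fun t ht => h.2 t (hm.2 t ht) fun v hv => hverts v (ht.1 hv)⟩

lemma insert_ssubset_of_notMem_of_notMem [DecidableEq V] {S m : Finset V} {a b w : V}
    (hab : a ≠ b) (ha : a ∈ m) (hb : b ∈ m) (haS : a ∉ S) (hbS : b ∉ S) (hSm : S ⊆ m)
    (hw : w ∈ m) : insert w S ⊂ m := by
  refine (Finset.ssubset_iff_of_subset (Finset.insert_subset hw hSm)).mpr ?_
  rcases eq_or_ne w a with rfl | hwa
  · exact ⟨b, hb, by simp [hab.symm, hbS]⟩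
  · exact ⟨a, ha, by simp [Ne.symm hwa, haS]⟩

end

/-- if `Γ` is strongly induced in `Δ` and `e` is a valid edge of `Γ`
(contained in no missing simplex of `Γ`), then `e` is contained in no missing simplex
of `Δ`. -/
theorem valid_in_ambient {V : Type*} [DecidableEq V] (Γ Δ : Set (Finset V))
    (hΓ : IsComplex Γ) (hΔ : IsComplex Δ) (hstr : StronglyInduced Γ Δ)
    (a b : V) (hab : a ≠ b) (he : ({a, b} : Finset V) ∈ Γ)
    (hvalid : ¬ ∃ m : Finset V, Missing Γ m ∧ ({a, b} : Finset V) ⊆ m) :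
    ¬ ∃ m : Finset V, Missing Δ m ∧ ({a, b} : Finset V) ⊆ m := by
  rintro ⟨m, hm, hem⟩
  have ha : a ∈ m := hem (by simp)
  have hb : b ∈ m := hem (by simp)
  set S := m.filter fun v => ({v} : Finset V) ∉ Γ with hS
  have hSm : S ⊆ m := Finset.filter_subset _ _
  have haS : a ∉ S := by simp [hS, hΓ _ he {a} (by simp)]
  have hbS : b ∉ S := by simp [hS, hΓ _ he {b} (by simp)]
  rcases S.eq_empty_or_nonempty with hSe | ⟨v, hv⟩
  · refine hvalid ⟨m, hm.of_induced (hstr.induced hΓ) fun u hu => ?_, hem⟩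
    simpa using Finset.filter_eq_empty_iff.mp hSe hu
  · have hSΔ : S ∈ Δ := hm.2 S ((Finset.ssubset_iff_of_subset hSm).mpr ⟨a, ha, haS⟩)
    have hSΓ : S ∉ Γ := fun h =>
      (Finset.mem_filter.mp hv).2 (hΓ S h {v} (Finset.singleton_subset_iff.mpr hv))
    have hmΔ := hstr.union_mem hΔ hSΔ hSΓ (T := m \ S) fun w hw => by
      obtain ⟨hwm, hwS⟩ := Finset.mem_sdiff.mp hw
      exact ⟨by simpa [hS, hwm] using hwS,
        hm.2 _ (insert_ssubset_of_notMem_of_notMem hab ha hb haS hbS hSm hwm)⟩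
    rw [Finset.union_sdiff_of_subset hSm] at hmΔ
    exact hm.1 hmΔ

end Fary
end
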